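/- Let α₁, α₂, α₃ ∈ ℂ be pairwise distinct, κ₁, κ₂, κ₃ ∈ ℂ∖{0}, and let L ⊆ (ℂ∖{0})³ be the image of the map z ↦ (κ₁(z−α₁), κ₂(z−α₂), κ₃(z−α₃)) defined on ℂ∖{α₁,α₂,α₃}. Set u₀ = (1,1,1), u₁ = (−1,0,0), u₂ = (0,−1,0), u₃ = (0,0,−1). Then there exist v ∈ ℝ³, l ≥ 0 and a partition {0,1,2,3} = {a,b} ⊔ {c,d} into two pairs such that, with w = v + l·(u_c + u_d) and Γ = {v + t·u_a : t ≥ 0} ∪ {v + t·u_b : t ≥ 0} ∪ {v + t·(u_c+u_d) : t ∈ [0,l]} ∪ {w + t·u_c : t ≥ 0} ∪ {w + t·u_d : t ≥ 0}, we have Log(L) ⊆ U_{8 log 2}(Γ) and Γ ⊆ U_{24 log 2}(Log(L)). -/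

import Mathlib

/-- Coordinate-wise logarithm of moduli, `Log(z)_i = log |z_i|`. -/
noncomputable def LogMap {n : ℕ} (z : Fin n → ℂ) : Fin n → ℝ :=
  fun i => Real.log ‖z i‖

/-- Open ε-neighbourhood of a set with respect to the sup norm on `Fin n → ℝ`. -/
def nbhd {n : ℕ} (ε : ℝ) (X : Set (Fin n → ℝ)) : Set (Fin n → ℝ) :=
  {y | ∃ x ∈ X, ‖y - x‖ < ε}

/-- Ray emanating from `v` in direction `d`. -/
def ray {n : ℕ} (v d : Fin n → ℝ) : Set (Fin n → ℝ) :=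
  {x | ∃ t : ℝ, 0 ≤ t ∧ x = v + t • d}

/-- Segment from `v` in direction `d` of parameter length `l`. -/
def seg {n : ℕ} (v d : Fin n → ℝ) (l : ℝ) : Set (Fin n → ℝ) :=
  {x | ∃ t : ℝ, 0 ≤ t ∧ t ≤ l ∧ x = v + t • d}

/-- The four end directions `u₀ = (1,1,1)`, `u₁ = (-1,0,0)`, `u₂ = (0,-1,0)`,
`u₃ = (0,0,-1)` of a tropical line in `ℝ³`. -/
noncomputable def lineDir : Fin 4 → Fin 3 → ℝ :=
  ![![1, 1, 1], ![-1, 0, 0], ![0, -1, 0], ![0, 0, -1]]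

/-- Image of a tropical line in `ℝ³`: two vertices `v` and `w = v + l•(u_c + u_d)`
joined by a bounded edge, with rays `u_a, u_b` at `v` and rays `u_c, u_d` at `w`. -/
noncomputable def tropLine3 (a b c d : Fin 4) (v : Fin 3 → ℝ) (l : ℝ) :
    Set (Fin 3 → ℝ) :=
  ray v (lineDir a) ∪ ray v (lineDir b) ∪
    seg v (lineDir c + lineDir d) l ∪
    ray (v + l • (lineDir c + lineDir d)) (lineDir c) ∪
    ray (v + l • (lineDir c + lineDir d)) (lineDir d)

/-!
Write `r_n = |z - α_n|`, so that the point of `L` with parameter `z` has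
`Log = (log |κ_n| + log r_n)_n`. If `r_m ≤ 2 r_n` for all `n`, the triangle inequality puts
`r_n` within a factor `4` of `max (r_m, |α_m - α_n|)`. So, up to `2 log 2` and the translation by
`(log |κ_n|)_n`, the amoeba is the union over `m` of the curves `s ↦ (max (s, log |α_m - α_n|))_n`
(coordinate `m` being `s`): every point of such a curve is realised by a `z` on the circle of
radius `e^s` about `α_m` that stays `e^s / 2` away from the two other roots.
Let `α_i, α_j` be the closest pair and `α_k` the third root. Replacing `|α_j - α_k|` by
`|α_i - α_k|` moves each curve by at most `log 2` and makes the distances ultrametric, and for an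
ultrametric the curves sweep out exactly a tropical line: with `a = log |α_i - α_j|` and
`b = log |α_i - α_k|`, its vertices are `(a, a, b)` and `(b, b, b)` in the coordinates `(i, j, k)`.
Both inclusions therefore hold with `3 log 2`.
-/

open Real

section TropPoint

variable {ι : Type*} [DecidableEq ι]

def tropPoint (δ : ι → ι → ℝ) (m : ι) (s : ℝ) : ι → ℝ :=
  fun n => if n = m then s else max s (δ m n)

@[simp] lemma tropPoint_self (δ : ι → ι → ℝ) (m : ι) (s : ℝ) : tropPoint δ m s m = s := by
  simp [tropPoint]

lemma tropPoint_of_ne (δ : ι → ι → ℝ) {m n : ι} (h : n ≠ m) (s : ℝ) :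
    tropPoint δ m s n = max s (δ m n) := by
  simp [tropPoint, h]

lemma tropPoint_sub_of_le {δ : ι → ι → ℝ} {m : ι} {s t : ℝ} (hs : ∀ n ≠ m, s ≤ δ m n)
    (ht : 0 ≤ t) : tropPoint δ m (s - t) = tropPoint δ m s - t • Pi.single m 1 := by
  funext n
  by_cases h : n = m
  · subst h; simp
  · simp [tropPoint_of_ne δ h, h, max_eq_right (hs n h),
      max_eq_right ((sub_le_self s ht).trans (hs n h))]

lemma tropPoint_add_of_ge {δ : ι → ι → ℝ} {m : ι} {s t : ℝ} (hs : ∀ n ≠ m, δ m n ≤ s)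
    (ht : 0 ≤ t) : tropPoint δ m (s + t) = tropPoint δ m s + t • 1 := by
  funext n
  by_cases h : n = m
  · subst h; simp
  · simp [tropPoint_of_ne δ h, max_eq_left (hs n h),
      max_eq_left ((hs n h).trans (le_add_of_nonneg_right ht))]

lemma norm_tropPoint_sub_tropPoint_le [Fintype ι] {δ δ' : ι → ι → ℝ} {m : ι} {c : ℝ}
    (hc : 0 ≤ c) (h : ∀ n ≠ m, |δ m n - δ' m n| ≤ c) (s : ℝ) :
    ‖tropPoint δ m s - tropPoint δ' m s‖ ≤ c := by
  refine (pi_norm_le_iff_of_nonneg hc).2 fun n => ?_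
  by_cases hn : n = m
  · subst hn; simpa using hc
  · rw [Pi.sub_apply, tropPoint_of_ne δ hn, tropPoint_of_ne δ' hn, Real.norm_eq_abs]
    exact (abs_max_sub_max_le_max _ _ _ _).trans (by simpa using h n hn)

end TropPoint

lemma lineDir_zero : lineDir 0 = 1 := by
  funext m; fin_cases m <;> rfl

lemma lineDir_succ (m : Fin 3) : lineDir m.succ = -Pi.single m 1 := by
  funext n; fin_cases m <;> fin_cases n <;> simp [lineDir]

lemma tropPoint_add_smul_lineDir_succ {δ : Fin 3 → Fin 3 → ℝ} {m : Fin 3} {s t : ℝ}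
    (hs : ∀ n ≠ m, s ≤ δ m n) (ht : 0 ≤ t) :
    tropPoint δ m s + t • lineDir m.succ = tropPoint δ m (s - t) := by
  rw [tropPoint_sub_of_le hs ht, lineDir_succ, smul_neg, sub_eq_add_neg]

lemma tropPoint_add_smul_lineDir_zero {δ : Fin 3 → Fin 3 → ℝ} {m : Fin 3} {s t : ℝ}
    (hs : ∀ n ≠ m, δ m n ≤ s) (ht : 0 ≤ t) :
    tropPoint δ m s + t • lineDir 0 = tropPoint δ m (s + t) := by
  rw [tropPoint_add_of_ge hs ht, lineDir_zero]

lemma Fin3.eq_or_eq_or_eq {i j k : Fin 3} (hij : i ≠ j) (hik : i ≠ k) (hjk : j ≠ k)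
    (m : Fin 3) : m = i ∨ m = j ∨ m = k := by
  omega

def ultraDist (k : Fin 3) (a b : ℝ) (m n : Fin 3) : ℝ :=
  if m = k ∨ n = k then b else a

lemma le_ultraDist {k : Fin 3} {a b : ℝ} (hab : a ≤ b) (m n : Fin 3) :
    a ≤ ultraDist k a b m n := by
  unfold ultraDist; split_ifs <;> simp [hab]

lemma ultraDist_le {k : Fin 3} {a b : ℝ} (hab : a ≤ b) (m n : Fin 3) :
    ultraDist k a b m n ≤ b := by
  unfold ultraDist; split_ifs <;> simp [hab]

lemma ultraDist_self_left (k : Fin 3) (a b : ℝ) (n : Fin 3) : ultraDist k a b k n = b := by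
  simp [ultraDist]

section TropLine

variable {i j k : Fin 3} (hij : i ≠ j) (hik : i ≠ k) (hjk : j ≠ k) {a b : ℝ} (Λ : Fin 3 → ℝ)
include hij hik hjk

local notation "P" => tropPoint (ultraDist k a b)

lemma tropPoint_ultraDist_swap_of_le {s : ℝ} (hs : a ≤ s) : P j s = P i s := by
  funext n
  rcases Fin3.eq_or_eq_or_eq hij hik hjk n with rfl | rfl | rfl <;>
    simp [tropPoint, ultraDist, hij, hik, hjk, hij.symm, hik.symm, hjk.symm, hs]

lemma tropPoint_ultraDist_far_of_le {s : ℝ} (hab : a ≤ b) (hs : b ≤ s) : P k s = P i s := by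
  funext n
  rcases Fin3.eq_or_eq_or_eq hij hik hjk n with rfl | rfl | rfl <;>
    simp [tropPoint, ultraDist, hik, hjk, hij.symm, hik.symm, hs, hab.trans hs]

lemma tropPoint_ultraDist_add {t : ℝ} (ht : 0 ≤ t) (htl : t ≤ b - a) :
    P i (a + t) = P i a + t • (lineDir 0 + lineDir k.succ) := by
  funext n
  rcases Fin3.eq_or_eq_or_eq hij hik hjk n with rfl | rfl | rfl <;>
    simp [tropPoint, ultraDist, lineDir_zero, lineDir_succ, hik, hjk, hij.symm, hik.symm,
      ht, show a + t ≤ b by linarith, show a ≤ b by linarith]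

lemma tropPoint_ultraDist_add_edge (hab : a ≤ b) :
    P i a + (b - a) • (lineDir 0 + lineDir k.succ) = P i b := by
  rw [← tropPoint_ultraDist_add hij hik hjk (sub_nonneg.2 hab) le_rfl, add_sub_cancel]

lemma tropPoint_ultraDist_mem_tropLine3_of_eq_left (hab : a ≤ b) (s : ℝ) :
    Λ + P i s ∈ tropLine3 i.succ j.succ 0 k.succ (Λ + P i a) (b - a) := by
  rcases le_total s a with hsa | has
  · refine Or.inl (Or.inl (Or.inl (Or.inl ⟨a - s, sub_nonneg.2 hsa, ?_⟩)))
    rw [add_assoc, tropPoint_add_smul_lineDir_succ (fun n _ => le_ultraDist hab i n)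
      (sub_nonneg.2 hsa), sub_sub_cancel]
  rcases le_total s b with hsb | hbs
  · refine Or.inl (Or.inl (Or.inr ⟨s - a, sub_nonneg.2 has, by linarith, ?_⟩))
    rw [add_assoc, ← tropPoint_ultraDist_add hij hik hjk (sub_nonneg.2 has) (by linarith),
      add_sub_cancel]
  · refine Or.inl (Or.inr ⟨s - b, sub_nonneg.2 hbs, ?_⟩)
    rw [add_assoc Λ, tropPoint_ultraDist_add_edge hij hik hjk hab, add_assoc,
      tropPoint_add_smul_lineDir_zero (fun n _ => ultraDist_le hab i n) (sub_nonneg.2 hbs),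
      add_sub_cancel]

lemma tropPoint_ultraDist_mem_tropLine3 (hab : a ≤ b) (m : Fin 3) (s : ℝ) :
    Λ + P m s ∈ tropLine3 i.succ j.succ 0 k.succ (Λ + P i a) (b - a) := by
  have hmem := tropPoint_ultraDist_mem_tropLine3_of_eq_left hij hik hjk Λ hab
  rcases Fin3.eq_or_eq_or_eq hij hik hjk m with rfl | rfl | rfl
  · exact hmem s
  · rcases le_total s a with hsa | has
    · refine Or.inl (Or.inl (Or.inl (Or.inr ⟨a - s, sub_nonneg.2 hsa, ?_⟩)))
      rw [add_assoc, ← tropPoint_ultraDist_swap_of_le hij hik hjk le_rfl,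
        tropPoint_add_smul_lineDir_succ (fun n _ => le_ultraDist hab m n) (sub_nonneg.2 hsa),
        sub_sub_cancel]
    · rw [tropPoint_ultraDist_swap_of_le hij hik hjk has]
      exact hmem s
  · rcases le_total s b with hsb | hbs
    · refine Or.inr ⟨b - s, sub_nonneg.2 hsb, ?_⟩
      rw [add_assoc Λ, tropPoint_ultraDist_add_edge hij hik hjk hab, add_assoc,
        ← tropPoint_ultraDist_far_of_le hij hik hjk hab le_rfl,
        tropPoint_add_smul_lineDir_succ (fun n _ => (ultraDist_self_left m a b n).ge)
          (sub_nonneg.2 hsb), sub_sub_cancel]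
    · rw [tropPoint_ultraDist_far_of_le hij hik hjk hab hbs]
      exact hmem s

lemma exists_tropPoint_ultraDist_eq_of_mem_tropLine3 (hab : a ≤ b) {x : Fin 3 → ℝ}
    (hx : x ∈ tropLine3 i.succ j.succ 0 k.succ (Λ + P i a) (b - a)) :
    ∃ m s, x = Λ + P m s := by
  have hw := tropPoint_ultraDist_add_edge hij hik hjk hab
  rcases hx with ((((⟨t, ht, rfl⟩ | ⟨t, ht, rfl⟩) | ⟨t, ht, htl, rfl⟩) | ⟨t, ht, rfl⟩) |
    ⟨t, ht, rfl⟩)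
  · exact ⟨i, a - t, by
      rw [add_assoc, tropPoint_add_smul_lineDir_succ (fun n _ => le_ultraDist hab i n) ht]⟩
  · exact ⟨j, a - t, by
      rw [add_assoc, ← tropPoint_ultraDist_swap_of_le hij hik hjk le_rfl,
        tropPoint_add_smul_lineDir_succ (fun n _ => le_ultraDist hab j n) ht]⟩
  · exact ⟨i, a + t, by rw [add_assoc, tropPoint_ultraDist_add hij hik hjk ht htl]⟩
  · exact ⟨i, b + t, by
      rw [add_assoc Λ, hw, add_assoc,
        tropPoint_add_smul_lineDir_zero (fun n _ => ultraDist_le hab i n) ht]⟩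
  · exact ⟨k, b - t, by
      rw [add_assoc Λ, hw, add_assoc, ← tropPoint_ultraDist_far_of_le hij hik hjk hab le_rfl,
        tropPoint_add_smul_lineDir_succ (fun n _ => (ultraDist_self_left k a b n).ge) ht]⟩

end TropLine

lemma Real.abs_log_sub_log_le_log {x y c : ℝ} (hx : 0 < x) (hy : 0 < y) (hxy : x ≤ c * y)
    (hyx : y ≤ c * x) : |log x - log y| ≤ log c := by
  have hc : 0 < c := pos_of_mul_pos_left (hx.trans_le hxy) hy.le
  rw [abs_le]
  constructor
  · have := log_le_log hy hyx
    rw [log_mul hc.ne' hx.ne'] at this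
    linarith
  · have := log_le_log hx hxy
    rw [log_mul hc.ne' hy.ne'] at this
    linarith

lemma Real.log_max {x y : ℝ} (hx : 0 < x) (hy : 0 < y) : log (max x y) = max (log x) (log y) :=
  strictMonoOn_log.monotoneOn.map_max hx hy

lemma abs_log_sub_log_max_le {ρ r δ : ℝ} (hρ : 0 < ρ) (hr : ρ / 2 ≤ r)
    (hr_le : r ≤ ρ + δ) (hδ_le : δ ≤ ρ + r) : |log r - log (max ρ δ)| ≤ 2 * log 2 := by
  have hM : 0 < max ρ δ := lt_max_of_lt_left hρ
  rw [show 2 * log 2 = log 4 by rw [show (4 : ℝ) = 2 ^ 2 by norm_num, log_pow]; norm_num]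
  refine abs_log_sub_log_le_log (by linarith) hM ?_ ?_
  · linarith [le_max_left ρ δ, le_max_right ρ δ]
  · rcases le_total ρ δ with h | h
    · rw [max_eq_right h]; linarith
    · rw [max_eq_left h]; linarith

noncomputable def logDist {N : ℕ} (α : Fin N → ℂ) (m n : Fin N) : ℝ := log (dist (α m) (α n))

lemma logDist_le_of_dist_le {N : ℕ} {α : Fin N → ℂ} (hα : Function.Injective α) {i j m n : Fin N}
    (hij : i ≠ j) (h : dist (α i) (α j) ≤ dist (α m) (α n)) : logDist α i j ≤ logDist α m n :=
  log_le_log (dist_pos.2 (hα.ne hij)) h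

noncomputable def lineAmoeba {N : ℕ} (α κ : Fin N → ℂ) : Set (Fin N → ℝ) :=
  LogMap '' ((fun z n => κ n * (z - α n)) '' {z | ∀ n, z ≠ α n})

lemma logMap_line_eq {N : ℕ} {α κ : Fin N → ℂ} (hκ : ∀ n, κ n ≠ 0) {z : ℂ} (hz : ∀ n, z ≠ α n) :
    LogMap (fun n => κ n * (z - α n)) = (fun n => log ‖κ n‖) + fun n => log (dist z (α n)) := by
  funext n
  simp only [LogMap, Pi.add_apply, norm_mul, dist_eq_norm]
  exact log_mul (norm_ne_zero_iff.2 (hκ n)) (norm_ne_zero_iff.2 (sub_ne_zero.2 (hz n)))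

lemma norm_logMap_line_sub_tropPoint_le {N : ℕ} {α κ : Fin N → ℂ} (hα : Function.Injective α)
    (hκ : ∀ n, κ n ≠ 0) {z : ℂ} {m : Fin N} (hz : z ≠ α m)
    (hnear : ∀ n, dist z (α m) / 2 ≤ dist z (α n)) :
    ‖LogMap (fun n => κ n * (z - α n)) -
        ((fun n => log ‖κ n‖) + tropPoint (logDist α) m (log (dist z (α m))))‖ ≤ 2 * log 2 := by
  have hρ : 0 < dist z (α m) := dist_pos.2 hz
  have hz' : ∀ n, z ≠ α n := fun n => dist_pos.1 ((half_pos hρ).trans_le (hnear n))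
  rw [logMap_line_eq hκ hz', add_sub_add_left_eq_sub]
  refine (pi_norm_le_iff_of_nonneg (by positivity)).2 fun n => ?_
  by_cases hn : n = m
  · subst hn; simp [Real.log_pos one_lt_two |>.le]
  rw [Pi.sub_apply, tropPoint_of_ne _ hn, logDist, Real.norm_eq_abs,
    ← Real.log_max hρ (dist_pos.2 (hα.ne (Ne.symm hn)))]
  exact abs_log_sub_log_max_le hρ (hnear n) (dist_triangle _ _ _)
    (dist_triangle_left _ _ _)

lemma false_of_lt_dist_of_dist_lt_half {X : Type*} [PseudoMetricSpace X] {x y q : X} {ρ : ℝ}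
    (hxy : ρ < dist x y) (hx : dist x q < ρ / 2) (hy : dist y q < ρ / 2) : False := by
  linarith [dist_triangle_right x y q]

/-- Among three points of the circle pairwise more than `ρ` apart, each `qᵢ` is within `ρ / 2` of
at most one. -/
lemma exists_dist_eq_and_half_le_dist (p q₁ q₂ : ℂ) {ρ : ℝ} (hρ : 0 < ρ) :
    ∃ z, dist z p = ρ ∧ ρ / 2 ≤ dist z q₁ ∧ ρ / 2 ≤ dist z q₂ := by
  set ω : ℂ := ⟨-1 / 2, √3 / 2⟩
  have h3 : √3 ^ 2 = 3 := Real.sq_sqrt (by norm_num)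
  have hω : ‖ω‖ = 1 := by
    rw [← pow_eq_one_iff_of_nonneg (norm_nonneg ω) two_ne_zero, Complex.sq_norm,
      Complex.normSq_apply]
    simp only [ω]; nlinarith
  have hdist : ∀ u v : ℂ, 1 < Complex.normSq (u - v) → ρ < dist (p + ρ * u) (p + ρ * v) := by
    intro u v huv
    rw [dist_eq_norm, add_sub_add_left_eq_sub, ← mul_sub, norm_mul, Complex.norm_real,
      Real.norm_of_nonneg hρ.le]
    refine lt_mul_of_one_lt_right hρ ((one_lt_sq_iff₀ (norm_nonneg _)).1 ?_)
    rwa [Complex.sq_norm]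
  have h01 := hdist 1 ω (by norm_num [Complex.normSq_apply, ω, ← sq, div_pow, h3])
  have h02 := hdist 1 (starRingEnd ℂ ω) (by norm_num [Complex.normSq_apply, ω, ← sq, div_pow, h3])
  have h12 := hdist ω (starRingEnd ℂ ω) (by norm_num [Complex.normSq_apply, ω, ← sq, div_pow, h3])
  by_contra! hfar
  have hnear : ∀ u : ℂ, ‖u‖ = 1 → dist (p + ρ * u) q₁ < ρ / 2 ∨ dist (p + ρ * u) q₂ < ρ / 2 := by
    intro u hu
    refine (lt_or_ge _ _).imp_right (hfar _ ?_)
    rw [dist_eq_norm, add_sub_cancel_left, norm_mul, hu, Complex.norm_real,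
      Real.norm_of_nonneg hρ.le, mul_one]
  rcases hnear 1 norm_one with h0 | h0 <;> rcases hnear ω hω with h1 | h1 <;>
    rcases hnear (starRingEnd ℂ ω) (by rwa [Complex.norm_conj]) with h2 | h2 <;>
    first
    | exact false_of_lt_dist_of_dist_lt_half h01 h0 h1
    | exact false_of_lt_dist_of_dist_lt_half h02 h0 h2
    | exact false_of_lt_dist_of_dist_lt_half h12 h1 h2

lemma exists_dist_eq_and_forall_half_le_dist (α : Fin 3 → ℂ) (m : Fin 3) {ρ : ℝ} (hρ : 0 < ρ) :
    ∃ z, dist z (α m) = ρ ∧ ∀ n, ρ / 2 ≤ dist z (α n) := by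
  obtain ⟨z, hzm, h₁, h₂⟩ := exists_dist_eq_and_half_le_dist (α m) (α (m + 1)) (α (m + 2)) hρ
  refine ⟨z, hzm, fun n => ?_⟩
  rcases (by omega : n = m ∨ n = m + 1 ∨ n = m + 2) with rfl | rfl | rfl
  · linarith
  · exact h₁
  · exact h₂

lemma exists_closest_pair {X : Type*} [PseudoMetricSpace X] (α : Fin 3 → X) :
    ∃ i j k : Fin 3, i ≠ j ∧ i ≠ k ∧ j ≠ k ∧
      dist (α i) (α j) ≤ dist (α i) (α k) ∧ dist (α i) (α j) ≤ dist (α j) (α k) := by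
  have h₀₁ := dist_comm (α 0) (α 1)
  have h₀₂ := dist_comm (α 0) (α 2)
  have h₁₂ := dist_comm (α 1) (α 2)
  rcases le_total (dist (α 0) (α 1)) (dist (α 0) (α 2)) with h₁ | h₁
  · rcases le_total (dist (α 0) (α 1)) (dist (α 1) (α 2)) with h₂ | h₂
    · exact ⟨0, 1, 2, by decide, by decide, by decide, h₁, h₂⟩
    · exact ⟨1, 2, 0, by decide, by decide, by decide, by linarith, by linarith⟩
  · rcases le_total (dist (α 0) (α 2)) (dist (α 1) (α 2)) with h₂ | h₂
    · exact ⟨0, 2, 1, by decide, by decide, by decide, h₁, by linarith⟩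
    · exact ⟨1, 2, 0, by decide, by decide, by decide, by linarith, by linarith⟩

lemma abs_logDist_sub_ultraDist_le {α : Fin 3 → ℂ} (hα : Function.Injective α) {i j k : Fin 3}
    (hij : i ≠ j) (hik : i ≠ k) (hjk : j ≠ k) (hD : dist (α i) (α j) ≤ dist (α i) (α k))
    (hE : dist (α i) (α j) ≤ dist (α j) (α k)) {m n : Fin 3} (hmn : n ≠ m) :
    |logDist α m n - ultraDist k (logDist α i j) (logDist α i k) m n| ≤ log 2 := by
  have hlog : |log (dist (α j) (α k)) - log (dist (α i) (α k))| ≤ log 2 :=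
    Real.abs_log_sub_log_le_log (dist_pos.2 (hα.ne hjk)) (dist_pos.2 (hα.ne hik))
      (by linarith [dist_triangle_left (α j) (α k) (α i)])
      (by linarith [dist_triangle (α i) (α j) (α k)])
  have hlog2 : 0 ≤ log 2 := (log_pos one_lt_two).le
  rcases Fin3.eq_or_eq_or_eq hij hik hjk m with rfl | rfl | rfl <;>
  rcases Fin3.eq_or_eq_or_eq hij hik hjk n with rfl | rfl | rfl <;>
  simp_all [ultraDist, logDist, dist_comm]

section ClosestPair

variable {α κ : Fin 3 → ℂ} (hα : Function.Injective α) (hκ : ∀ n, κ n ≠ 0) {i j k : Fin 3}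
  (hij : i ≠ j) (hik : i ≠ k) (hjk : j ≠ k) (hD : dist (α i) (α j) ≤ dist (α i) (α k))
  (hE : dist (α i) (α j) ≤ dist (α j) (α k))
include hα hκ hij hik hjk hD hE

lemma norm_logMap_line_sub_tropPoint_ultraDist_le {z : ℂ} {m : Fin 3} (hz : z ≠ α m)
    (hnear : ∀ n, dist z (α m) / 2 ≤ dist z (α n)) :
    ‖LogMap (fun n => κ n * (z - α n)) - ((fun n => log ‖κ n‖) +
        tropPoint (ultraDist k (logDist α i j) (logDist α i k)) m (log (dist z (α m))))‖ ≤
      3 * log 2 := by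
  calc _ ≤ _ := norm_sub_le_norm_sub_add_norm_sub _
        ((fun n => log ‖κ n‖) + tropPoint (logDist α) m (log (dist z (α m)))) _
    _ ≤ 2 * log 2 + log 2 := by
      refine add_le_add (norm_logMap_line_sub_tropPoint_le hα hκ hz hnear) ?_
      rw [add_sub_add_left_eq_sub]
      exact norm_tropPoint_sub_tropPoint_le (log_pos one_lt_two).le
        (fun n hn => abs_logDist_sub_ultraDist_le hα hij hik hjk hD hE hn) _
    _ = 3 * log 2 := by ring

local notation "Γ" => tropLine3 i.succ j.succ 0 k.succ
  ((fun n => log ‖κ n‖) + tropPoint (ultraDist k (logDist α i j) (logDist α i k)) i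
    (logDist α i j)) (logDist α i k - logDist α i j)

lemma lineAmoeba_subset_nbhd_tropLine3 : lineAmoeba α κ ⊆ nbhd (8 * log 2) Γ := by
  rintro _ ⟨_, ⟨z, hz, rfl⟩, rfl⟩
  obtain ⟨m, hm⟩ := Finite.exists_min fun n => dist z (α n)
  refine ⟨_, tropPoint_ultraDist_mem_tropLine3 hij hik hjk _
    (logDist_le_of_dist_le hα hij hD) m (log (dist z (α m))), ?_⟩
  refine (norm_logMap_line_sub_tropPoint_ultraDist_le hα hκ hij hik hjk hD hE (hz m)
    fun n => (half_le_self dist_nonneg).trans (hm n)).trans_lt ?_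
  linarith [log_pos one_lt_two]

lemma tropLine3_subset_nbhd_lineAmoeba : Γ ⊆ nbhd (24 * log 2) (lineAmoeba α κ) := by
  intro x hx
  obtain ⟨m, s, rfl⟩ := exists_tropPoint_ultraDist_eq_of_mem_tropLine3 hij hik hjk _
    (logDist_le_of_dist_le hα hij hD) hx
  obtain ⟨z, hzm, hnear⟩ := exists_dist_eq_and_forall_half_le_dist α m (exp_pos s)
  have hz : ∀ n, z ≠ α n := fun n => dist_pos.1 ((half_pos (exp_pos s)).trans_le (hnear n))
  refine ⟨_, ⟨_, ⟨z, hz, rfl⟩, rfl⟩, ?_⟩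
  have hclose := norm_logMap_line_sub_tropPoint_ultraDist_le hα hκ hij hik hjk hD hE (hz m)
    (by rwa [hzm])
  rw [hzm, log_exp, norm_sub_rev] at hclose
  linarith [log_pos one_lt_two]

end ClosestPair

theorem exists_tropLine3_near_lineAmoeba {α κ : Fin 3 → ℂ} (hα : Function.Injective α)
    (hκ : ∀ n, κ n ≠ 0) :
    ∃ (v : Fin 3 → ℝ) (l : ℝ) (a b c d : Fin 4),
      0 ≤ l ∧ a ≠ b ∧ a ≠ c ∧ a ≠ d ∧ b ≠ c ∧ b ≠ d ∧ c ≠ d ∧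
      lineAmoeba α κ ⊆ nbhd (8 * log 2) (tropLine3 a b c d v l) ∧
      tropLine3 a b c d v l ⊆ nbhd (24 * log 2) (lineAmoeba α κ) := by
  obtain ⟨i, j, k, hij, hik, hjk, hD, hE⟩ := exists_closest_pair α
  exact ⟨_, _, i.succ, j.succ, 0, k.succ,
    sub_nonneg.2 (logDist_le_of_dist_le hα hij hD), Fin.succ_injective _ |>.ne hij,
    Fin.succ_ne_zero i, Fin.succ_injective _ |>.ne hik, Fin.succ_ne_zero j,
    Fin.succ_injective _ |>.ne hjk, (Fin.succ_ne_zero k).symm,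
    lineAmoeba_subset_nbhd_tropLine3 hα hκ hij hik hjk hD hE,
    tropLine3_subset_nbhd_lineAmoeba hα hκ hij hik hjk hD hE⟩

/-- For the complex line `L ⊆ (ℂ*)³` parametrised by
`z ↦ (κ₁(z-α₁), κ₂(z-α₂), κ₃(z-α₃))` there exist a tropical line `Γ` in `ℝ³`
(two vertices joined by a bounded edge, with two of the four rays at each vertex)
with `Log(L) ⊆ U_{8 log 2}(Γ)` and `Γ ⊆ U_{24 log 2}(Log(L))`. -/
theorem stmt_5 (α₁ α₂ α₃ : ℂ) (h12 : α₁ ≠ α₂) (h13 : α₁ ≠ α₃) (h23 : α₂ ≠ α₃)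
    (κ₁ κ₂ κ₃ : ℂ) (hκ₁ : κ₁ ≠ 0) (hκ₂ : κ₂ ≠ 0) (hκ₃ : κ₃ ≠ 0) :
    ∃ (v : Fin 3 → ℝ) (l : ℝ) (a b c d : Fin 4),
      0 ≤ l ∧
      a ≠ b ∧ a ≠ c ∧ a ≠ d ∧ b ≠ c ∧ b ≠ d ∧ c ≠ d ∧
      LogMap '' ((fun z : ℂ => ![κ₁ * (z - α₁), κ₂ * (z - α₂), κ₃ * (z - α₃)]) ''
          {z : ℂ | z ≠ α₁ ∧ z ≠ α₂ ∧ z ≠ α₃})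
        ⊆ nbhd (8 * Real.log 2) (tropLine3 a b c d v l) ∧
      tropLine3 a b c d v l
        ⊆ nbhd (24 * Real.log 2)
          (LogMap '' ((fun z : ℂ => ![κ₁ * (z - α₁), κ₂ * (z - α₂), κ₃ * (z - α₃)]) ''
            {z : ℂ | z ≠ α₁ ∧ z ≠ α₂ ∧ z ≠ α₃})) := by
  have hL : LogMap '' ((fun z : ℂ => ![κ₁ * (z - α₁), κ₂ * (z - α₂), κ₃ * (z - α₃)]) ''
      {z : ℂ | z ≠ α₁ ∧ z ≠ α₂ ∧ z ≠ α₃}) = lineAmoeba ![α₁, α₂, α₃] ![κ₁, κ₂, κ₃] := by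
    simp only [lineAmoeba, Fin.forall_fin_succ, IsEmpty.forall_iff]
    congr! with z n
    · fin_cases n <;> rfl
    · simp
  rw [hL]
  refine exists_tropLine3_near_lineAmoeba ?_ ?_
  · intro m n h; fin_cases m <;> fin_cases n <;> simp_all [eq_comm]
  · intro n; fin_cases n <;> simpa
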